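/- arXiv:1910.08813 — 4 statements merged into one kernel-verified Lean document; each statement's English description precedes it below -/
import Mathlib

section
/- Let A ∈ ℂ^{n×n} be Hermitian with tr A = 0. Then there exists a unitary matrix V ∈ ℂ^{n×n} such that V*AV is hollow (all diagonal entries zero). -/
open Matrix Complex

noncomputable def dftM (n : ℕ) : Matrix (Fin n) (Fin n) ℂ :=
  fun k l => (Real.sqrt n : ℂ)⁻¹ * Complex.exp (2 * Real.pi * I / n) ^ ((k : ℕ) * l)

lemma dft_key (n : ℕ) (hn : 0 < n) (i j : Fin n) (k : Fin n) :
    (starRingEnd ℂ) (dftM n k i) * dftM n k j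
      = (n : ℂ)⁻¹ * (Complex.exp (2 * Real.pi * I / n) ^ ((j : ℤ) - (i : ℤ))) ^ (k : ℕ) := by
  set ζ : ℂ := Complex.exp (2 * Real.pi * I / n) with hζ
  have hζ0 : ζ ≠ 0 := Complex.exp_ne_zero _
  have hconjζ : (starRingEnd ℂ) ζ = ζ⁻¹ := by
    rw [hζ, ← Complex.exp_conj, ← Complex.exp_neg]
    congr 1
    simp only [map_div₀, _root_.map_mul, Complex.conj_I, Complex.conj_ofReal, map_ofNat,
      Complex.conj_natCast]
    ring
  have hsq : ((Real.sqrt n : ℂ))⁻¹ * ((Real.sqrt n : ℂ))⁻¹ = (n : ℂ)⁻¹ := by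
    rw [← mul_inv]
    congr 1
    rw [← Complex.ofReal_mul, ← Real.sqrt_mul_self (Nat.cast_nonneg n)]
    norm_num
  have hc : (starRingEnd ℂ) ((Real.sqrt n : ℂ))⁻¹ = ((Real.sqrt n : ℂ))⁻¹ := by
    simp
  simp only [dftM, _root_.map_mul, map_pow, ← hζ, hconjζ, hc]
  rw [show (ζ ^ ((j:ℤ) - (i:ℤ))) ^ (k:ℕ) = ζ ^ ((k:ℤ) * j) * (ζ ^ ((k:ℤ) * i))⁻¹ by
    rw [← zpow_natCast (ζ ^ ((j:ℤ) - (i:ℤ))), ← _root_.zpow_mul, ← _root_.zpow_neg, ← zpow_add₀ hζ0]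
    congr 1
    ring]
  rw [show ζ⁻¹ ^ ((k:ℕ) * (i:ℕ)) = (ζ ^ ((k:ℤ) * i))⁻¹ by
    rw [inv_pow, ← zpow_natCast]
    push_cast
    ring_nf]
  rw [show ζ ^ ((k:ℕ) * (j:ℕ)) = ζ ^ ((k:ℤ) * j) by
    rw [← zpow_natCast]; push_cast; ring_nf]
  rw [mul_mul_mul_comm, hsq]
  ring

lemma dft_unitary (n : ℕ) (hn : 0 < n) : (dftM n)ᴴ * dftM n = 1 := by
  have hpr : IsPrimitiveRoot (Complex.exp (2 * Real.pi * I / n)) n :=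
    Complex.isPrimitiveRoot_exp n hn.ne'
  ext i j
  simp only [mul_apply, conjTranspose_apply, one_apply, star_def]
  rw [Finset.sum_congr rfl (fun k _ => dft_key n hn i j k), ← Finset.mul_sum]
  set ζ : ℂ := Complex.exp (2 * Real.pi * I / n) with hζ
  set w : ℂ := ζ ^ ((j : ℤ) - (i : ℤ)) with hw
  rw [Fin.sum_univ_eq_sum_range (fun k => w ^ k) n]
  by_cases h : i = j
  · subst h
    simp only [hw, sub_self, zpow_zero]
    simp only [if_true, one_pow]
    rw [Finset.sum_const, Finset.card_range]
    simp only [nsmul_eq_mul, mul_one]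
    rw [inv_mul_cancel₀ (by exact_mod_cast hn.ne' : (n:ℂ) ≠ 0)]
  · rw [if_neg h]
    have hw1 : w ≠ 1 := by
      intro hcon
      rw [hw, hpr.zpow_eq_one_iff_dvd] at hcon
      have h1 : ((j : ℤ) - (i : ℤ)) = 0 := by
        refine Int.eq_zero_of_dvd_of_natAbs_lt_natAbs hcon ?_
        have := i.isLt; have := j.isLt
        simp only [Int.natAbs_natCast]
        omega
      have : (j : ℤ) = i := by omega
      exact h (Fin.ext (by exact_mod_cast this)).symm
    have hwn : w ^ n = 1 := by
      rw [hw, ← _root_.zpow_natCast, ← _root_.zpow_mul, mul_comm, _root_.zpow_mul,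
        hpr.zpow_eq_one, _root_.one_zpow]
    rw [geom_sum_eq hw1, hwn]
    simp

lemma dft_diag (n : ℕ) (hn : 0 < n) (d : Fin n → ℂ) (i : Fin n) :
    ((dftM n)ᴴ * diagonal d * dftM n) i i = (∑ k, d k) / n := by
  simp only [mul_apply, diagonal_apply, conjTranspose_apply, star_def, mul_ite, mul_zero,
    ite_mul, zero_mul, Finset.sum_ite_eq, Finset.sum_ite_eq', Finset.mem_univ, if_true]
  have key : ∀ k : Fin n, (starRingEnd ℂ) (dftM n k i) * d k * dftM n k i
      = d k * (n : ℂ)⁻¹ := by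
    intro k
    have := dft_key n hn i i k
    rw [sub_self, zpow_zero, one_pow, mul_one] at this
    calc (starRingEnd ℂ) (dftM n k i) * d k * dftM n k i
        = (starRingEnd ℂ) (dftM n k i) * dftM n k i * d k := by ring
      _ = (n:ℂ)⁻¹ * d k := by rw [this]
      _ = d k * (n:ℂ)⁻¹ := by ring
  rw [Finset.sum_congr rfl (fun k _ => key k), ← Finset.sum_mul]
  rw [div_eq_mul_inv]

theorem stmt_11 (n : ℕ) (A : Matrix (Fin n) (Fin n) ℂ)
    (hA : A.IsHermitian) (htr : A.trace = 0) :
    ∃ V : Matrix (Fin n) (Fin n) ℂ, Vᴴ * V = 1 ∧ ∀ i, (Vᴴ * A * V) i i = 0 := by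
  rcases Nat.eq_zero_or_pos n with hn | hn
  · subst hn
    exact ⟨1, by simp, fun i => i.elim0⟩
  set U : Matrix (Fin n) (Fin n) ℂ := (hA.eigenvectorUnitary : Matrix (Fin n) (Fin n) ℂ) with hU
  have hUu : Uᴴ * U = 1 := by
    rw [← Matrix.star_eq_conjTranspose]
    exact Unitary.coe_star_mul_self hA.eigenvectorUnitary
  set F := dftM n with hF
  refine ⟨U * F, ?_, ?_⟩
  · rw [conjTranspose_mul, mul_assoc, ← mul_assoc Uᴴ, hUu, one_mul, dft_unitary n hn]
  · intro i
    have hdiag : Uᴴ * A * U = diagonal (RCLike.ofReal ∘ hA.eigenvalues) := by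
      rw [← Matrix.star_eq_conjTranspose]
      exact (Unitary.conjStarAlgAut_star_apply ..).symm.trans hA.conjStarAlgAut_star_eigenvectorUnitary
    have hAV : (U * F)ᴴ * A * (U * F) = Fᴴ * diagonal (RCLike.ofReal ∘ hA.eigenvalues) * F := by
      rw [conjTranspose_mul, ← hdiag]
      simp only [mul_assoc]
    rw [hAV, dft_diag n hn]
    have hsum : (∑ k, (RCLike.ofReal ∘ hA.eigenvalues : Fin n → ℂ) k) = A.trace := by
      calc (∑ k, (RCLike.ofReal ∘ hA.eigenvalues : Fin n → ℂ) k)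
          = (diagonal (RCLike.ofReal ∘ hA.eigenvalues) : Matrix (Fin n) (Fin n) ℂ).trace := by
            rw [trace_diagonal]
        _ = (Uᴴ * A * U).trace := by rw [hdiag]
        _ = (U * Uᴴ * A).trace := by rw [trace_mul_comm, mul_assoc]
        _ = A.trace := by
            rw [show U * Uᴴ = 1 from ?_, one_mul]
            rw [← Matrix.star_eq_conjTranspose]
            exact Unitary.coe_mul_star_self hA.eigenvectorUnitary
    rw [hsum, htr, zero_div]
end

section
/- Let A, B ∈ ℂ^{n×n} be Hermitian with tr A = tr B = 0. Then there exists a unitary matrix V ∈ ℂ^{n×n} such that both V*AV and V*BV are hollow. -/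
open Matrix

variable {n m : ℕ}

lemma dot_sum_right (u : Fin n → ℂ) (v : Fin m → Fin n → ℂ) (d : Fin m → ℂ) :
    u ⬝ᵥ (∑ j, d j • v j) = ∑ j, d j * (u ⬝ᵥ v j) := by
  simp only [dotProduct, Finset.sum_apply, Pi.smul_apply, smul_eq_mul, Finset.mul_sum,
    Finset.sum_mul]
  rw [Finset.sum_comm]
  congr 1; ext j; congr 1; ext k; ring

lemma dot_sum_left (u : Fin n → ℂ) (v : Fin m → Fin n → ℂ) (c : Fin m → ℂ) :
    star (∑ i, c i • v i) ⬝ᵥ u = ∑ i, star (c i) * (star (v i) ⬝ᵥ u) := by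
  simp only [dotProduct, Finset.sum_apply, Pi.smul_apply, Pi.star_apply, smul_eq_mul, star_mul',
    star_sum, Finset.sum_mul, Finset.mul_sum]
  rw [Finset.sum_comm]
  congr 1; ext i; congr 1; ext k; ring

lemma mulVec_sum' (T : Matrix (Fin n) (Fin n) ℂ) (v : Fin m → Fin n → ℂ) (d : Fin m → ℂ) :
    T *ᵥ (∑ j, d j • v j) = ∑ j, d j • (T *ᵥ v j) := by
  have := map_sum T.mulVecLin (fun j => d j • v j) Finset.univ
  simp only [Matrix.mulVecLin_apply, _root_.map_smul] at this
  exact this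

lemma dot_sum_sum (T : Matrix (Fin n) (Fin n) ℂ) (x : Fin m → Fin n → ℂ)
    (c d : Fin m → ℂ) :
    star (∑ i, c i • x i) ⬝ᵥ T *ᵥ (∑ i, d i • x i)
      = ∑ i, ∑ j, star (c i) * (d j * (star (x i) ⬝ᵥ T *ᵥ x j)) := by
  rw [mulVec_sum', dot_sum_left]
  congr 1; ext i
  rw [dot_sum_right, Finset.mul_sum]

lemma dot_sum_sum' (x : Fin m → Fin n → ℂ) (c d : Fin m → ℂ) :
    star (∑ i, c i • x i) ⬝ᵥ (∑ i, d i • x i)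
      = ∑ i, ∑ j, star (c i) * (d j * (star (x i) ⬝ᵥ x j)) := by
  have := dot_sum_sum (1 : Matrix (Fin n) (Fin n) ℂ) x c d
  simpa only [Matrix.one_mulVec] using this

variable {n : ℕ}

lemma dot_pair (T : Matrix (Fin n) (Fin n) ℂ) (x y : Fin n → ℂ) (α β : ℂ) :
    star (α • x + β • y) ⬝ᵥ T *ᵥ (α • x + β • y)
      = star α * α * (star x ⬝ᵥ T *ᵥ x) + star α * β * (star x ⬝ᵥ T *ᵥ y)
        + star β * α * (star y ⬝ᵥ T *ᵥ x) + star β * β * (star y ⬝ᵥ T *ᵥ y) := by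
  simp only [star_add, star_smul, add_dotProduct, smul_dotProduct, mulVec_add, mulVec_smul,
    dotProduct_add, dotProduct_smul, smul_eq_mul]
  ring

lemma dot_pair' (x y : Fin n → ℂ) (α β : ℂ) :
    star (α • x + β • y) ⬝ᵥ (α • x + β • y)
      = star α * α * (star x ⬝ᵥ x) + star α * β * (star x ⬝ᵥ y)
        + star β * α * (star y ⬝ᵥ x) + star β * β * (star y ⬝ᵥ y) := by
  have := dot_pair (1 : Matrix (Fin n) (Fin n) ℂ) x y α β
  simpa only [Matrix.one_mulVec] using this

lemma seg (T : Matrix (Fin n) (Fin n) ℂ) (x y : Fin n → ℂ)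
    (hx : star x ⬝ᵥ x = 1) (hy : star y ⬝ᵥ y = 1) (hxy : star x ⬝ᵥ y = 0)
    (t : ℝ) (ht0 : 0 ≤ t) (ht1 : t ≤ 1) :
    ∃ α β : ℂ,
      star (α • x + β • y) ⬝ᵥ (α • x + β • y) = 1 ∧
      star (α • x + β • y) ⬝ᵥ T *ᵥ (α • x + β • y)
        = (1 - (t : ℂ)) * (star x ⬝ᵥ T *ᵥ x) + (t : ℂ) * (star y ⬝ᵥ T *ᵥ y) := by
  have hyx : star y ⬝ᵥ x = 0 := by
    rw [star_dotProduct] at hxy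
    exact star_eq_zero.mp hxy
  set qx := star x ⬝ᵥ T *ᵥ x with hqx
  set qy := star y ⬝ᵥ T *ᵥ y with hqy
  set a := star x ⬝ᵥ T *ᵥ y with ha
  set b := star y ⬝ᵥ T *ᵥ x with hb
  by_cases hδ : qy - qx = 0
  · refine ⟨1, 0, ?_, ?_⟩
    · rw [dot_pair', hx, hy, hxy, hyx]; simp
    · rw [dot_pair, ← hqx, ← hqy, ← ha, ← hb]
      have h1 : qy = qx := by linear_combination hδ
      simp only [star_one, star_zero]
      linear_combination (-(t:ℂ)) * h1
  · -- find φ₀ with (g φ₀) * conj δ real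
    set δ := qy - qx with hδdef
    set g : ℝ → ℂ := fun φ => Complex.exp (φ * Complex.I) * a + Complex.exp (-(φ * Complex.I)) * b
      with hg
    set h : ℝ → ℝ := fun φ => (g φ * star δ).im with hh
    have hcont : Continuous h := by
      apply Complex.continuous_im.comp
      apply Continuous.mul _ continuous_const
      apply Continuous.add
      · exact (Complex.continuous_exp.comp ((Complex.continuous_ofReal).mul continuous_const)).mul
          continuous_const
      · exact (Complex.continuous_exp.comp
          (((Complex.continuous_ofReal).mul continuous_const).neg)).mul continuous_const
    have e1 : Complex.exp ((Real.pi : ℂ) * Complex.I) = -1 := Complex.exp_pi_mul_I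
    have e2 : Complex.exp (-((Real.pi : ℂ) * Complex.I)) = -1 := by
      rw [Complex.exp_neg, e1]; norm_num
    have hπ : h Real.pi = - h 0 := by
      have h0v : h 0 = ((a + b) * star δ).im := by
        simp only [hh, hg, Complex.ofReal_zero, zero_mul, neg_zero, Complex.exp_zero, one_mul]
      have hπv : h Real.pi = (-((a + b) * star δ)).im := by
        simp only [hh, hg]
        rw [e1, e2]
        congr 1
        ring
      rw [hπv, h0v, Complex.neg_im]
    obtain ⟨φ₀, hφ₀⟩ : ∃ φ₀, h φ₀ = 0 := by
      rcases le_total (h 0) 0 with h0 | h0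
      · have hmem : (0:ℝ) ∈ Set.Icc (h 0) (h Real.pi) := ⟨h0, by rw [hπ]; linarith⟩
        obtain ⟨φ₀, _, hv⟩ := intermediate_value_Icc Real.pi_pos.le hcont.continuousOn hmem
        exact ⟨φ₀, hv⟩
      · have hmem : (0:ℝ) ∈ Set.Icc (h Real.pi) (h 0) := ⟨by rw [hπ]; linarith, h0⟩
        obtain ⟨φ₀, _, hv⟩ := intermediate_value_Icc' Real.pi_pos.le hcont.continuousOn hmem
        exact ⟨φ₀, hv⟩
    set s : ℝ := (g φ₀ * star δ).re with hs
    have hgs : g φ₀ * star δ = (s : ℂ) := by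
      apply Complex.ext
      · rw [Complex.ofReal_re]
      · rw [Complex.ofReal_im]
        exact hφ₀
    set r : ℝ := s / Complex.normSq δ with hr
    have hnsq : star δ * δ = (Complex.normSq δ : ℂ) := by
      rw [Complex.star_def, Complex.normSq_eq_conj_mul_self]
    have hδ0 : δ ≠ 0 := hδ
    have hnsq0 : Complex.normSq δ ≠ 0 := by
      simpa [Complex.normSq_eq_zero] using hδ0
    have hgr : g φ₀ = (r : ℂ) * δ := by
      have h2 : g φ₀ * (Complex.normSq δ : ℂ) = (s : ℂ) * δ := by
        rw [← hnsq, ← mul_assoc, hgs]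
      have h3 : (Complex.normSq δ : ℂ) ≠ 0 := by
        simpa using hnsq0
      rw [hr, Complex.ofReal_div, div_mul_eq_mul_div, eq_div_iff h3]
      exact h2
    -- find θ
    set c : ℝ → ℝ := fun θ => Real.sin θ ^ 2 + r * Real.sin θ * Real.cos θ with hc
    have hccont : Continuous c := by
      apply Continuous.add
      · exact (Real.continuous_sin.pow 2)
      · exact (continuous_const.mul Real.continuous_sin).mul Real.continuous_cos
    have hmem : t ∈ Set.Icc (c 0) (c (Real.pi/2)) := by
      constructor
      · simpa [hc] using ht0
      · simpa [hc] using ht1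
    obtain ⟨θ, _, hθ⟩ := intermediate_value_Icc (by positivity : (0:ℝ) ≤ Real.pi/2)
      hccont.continuousOn hmem
    -- assemble
    refine ⟨(Real.cos θ : ℂ), Complex.exp ((φ₀ : ℂ) * Complex.I) * (Real.sin θ : ℂ), ?_, ?_⟩
    · have hstar : star (Complex.exp ((φ₀ : ℂ) * Complex.I)) = Complex.exp (-((φ₀ : ℂ) * Complex.I)) := by
        rw [Complex.star_def, ← Complex.exp_conj]
        congr 1
        rw [_root_.map_mul, Complex.conj_ofReal, Complex.conj_I]
        ring
      have hee : Complex.exp (-((φ₀ : ℂ) * Complex.I)) * Complex.exp ((φ₀ : ℂ) * Complex.I) = 1 := by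
        rw [← Complex.exp_add]; simp
      rw [dot_pair', hx, hy, hxy, hyx]
      have hpyth : (Real.sin θ : ℂ)^2 + (Real.cos θ : ℂ)^2 = 1 := by
        rw [← Complex.ofReal_pow, ← Complex.ofReal_pow, ← Complex.ofReal_add,
          Real.sin_sq_add_cos_sq, Complex.ofReal_one]
      simp only [star_mul', hstar, Complex.star_def, Complex.conj_ofReal, mul_zero, mul_one,
        add_zero, zero_mul]
      linear_combination hpyth + (Real.sin θ : ℂ)^2 * hee
    · rw [dot_pair, ← hqx, ← hqy, ← ha, ← hb]
      have hstar : star (Complex.exp ((φ₀ : ℂ) * Complex.I)) = Complex.exp (-((φ₀ : ℂ) * Complex.I)) := by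
        rw [Complex.star_def, ← Complex.exp_conj]
        congr 1
        rw [_root_.map_mul, Complex.conj_ofReal, Complex.conj_I]
        ring
      have hpyth : (Real.sin θ : ℂ)^2 + (Real.cos θ : ℂ)^2 = 1 := by
        rw [← Complex.ofReal_pow, ← Complex.ofReal_pow, ← Complex.ofReal_add,
          Real.sin_sq_add_cos_sq, Complex.ofReal_one]
      have hθC : (Real.sin θ : ℂ)^2 + (r : ℂ) * (Real.sin θ : ℂ) * (Real.cos θ : ℂ) = (t : ℂ) := by
        rw [← Complex.ofReal_pow, ← Complex.ofReal_mul, ← Complex.ofReal_mul,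
          ← Complex.ofReal_add]
        exact congrArg Complex.ofReal hθ
      have hgr' : Complex.exp ((φ₀ : ℂ) * Complex.I) * a
          + Complex.exp (-((φ₀ : ℂ) * Complex.I)) * b = (r : ℂ) * (qy - qx) := by
        have := hgr
        simp only [hg] at this
        rw [this, hδdef]
      simp only [star_mul', hstar, Complex.star_def, Complex.conj_ofReal]
      have hee : Complex.exp (-((φ₀ : ℂ) * Complex.I)) * Complex.exp ((φ₀ : ℂ) * Complex.I) = 1 := by
        rw [← Complex.exp_add]; simp
      linear_combination ((Real.cos θ : ℂ) * (Real.sin θ : ℂ)) * hgr'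
        + (qy - qx) * hθC + qx * hpyth + (Real.sin θ : ℂ)^2 * qy * hee

variable {n : ℕ}

lemma hull (T : Matrix (Fin n) (Fin n) ℂ) :
    ∀ (m : ℕ) (x : Fin m → Fin n → ℂ),
      (∀ i j, star (x i) ⬝ᵥ x j = if i = j then 1 else 0) →
      ∀ (w : Fin m → ℝ), (∀ i, 0 ≤ w i) → (∑ i, w i) = 1 →
      ∃ c : Fin m → ℂ,
        star (∑ i, c i • x i) ⬝ᵥ (∑ i, c i • x i) = 1 ∧
        star (∑ i, c i • x i) ⬝ᵥ T *ᵥ (∑ i, c i • x i)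
          = ∑ i, (w i : ℂ) * (star (x i) ⬝ᵥ T *ᵥ x i) := by
  intro m
  induction m with
  | zero =>
    intro x hx w hw hw1
    simp at hw1
  | succ m ih =>
    intro x hx w hw hw1
    set s : ℝ := ∑ i : Fin m, w i.succ with hsdef
    have hs0 : 0 ≤ s := Finset.sum_nonneg fun i _ => hw _
    have hsum : w 0 + s = 1 := by rw [hsdef, ← Fin.sum_univ_succ]; exact hw1
    by_cases hs : s = 0
    · have hw0 : w 0 = 1 := by linarith
      have hwz : ∀ i ∈ Finset.univ, w (Fin.succ i) = 0 :=
        (Finset.sum_eq_zero_iff_of_nonneg (fun i _ => hw i.succ)).mp (by rw [← hsdef]; exact hs)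
      refine ⟨fun i => if i = 0 then 1 else 0, ?_, ?_⟩
      all_goals
        rw [show (∑ i : Fin (m+1), (if i = 0 then (1:ℂ) else 0) • x i) = x 0 by
          rw [Fin.sum_univ_succ]; simp [Fin.succ_ne_zero]]
      · rw [hx 0 0]; simp
      · rw [Fin.sum_univ_succ, hw0]
        have hz : ∑ i : Fin m, ((w i.succ : ℂ)) * (star (x i.succ) ⬝ᵥ T *ᵥ x i.succ) = 0 :=
          Finset.sum_eq_zero fun i _ => by rw [hwz i (Finset.mem_univ i)]; simp
        rw [hz]
        simp
    · have hspos : 0 < s := lt_of_le_of_ne hs0 (Ne.symm hs)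
      set w' : Fin m → ℝ := fun i => w i.succ / s with hw'def
      have hw' : ∀ i, 0 ≤ w' i := fun i => div_nonneg (hw _) hs0
      have hw'1 : (∑ i, w' i) = 1 := by
        rw [hw'def, ← Finset.sum_div, ← hsdef, div_self hs]
      set x' : Fin m → Fin n → ℂ := fun i => x i.succ with hx'def
      have hx' : ∀ i j, star (x' i) ⬝ᵥ x' j = if i = j then 1 else 0 := by
        intro i j
        rw [hx'def]
        simp only []
        rw [hx i.succ j.succ]
        simp [Fin.succ_inj]
      obtain ⟨c', hc'1, hc'2⟩ := ih x' hx' w' hw' hw'1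
      set z' : Fin n → ℂ := ∑ i, c' i • x' i with hz'def
      have hx00 : star (x 0) ⬝ᵥ x 0 = 1 := by rw [hx 0 0]; simp
      have hoz : star (x 0) ⬝ᵥ z' = 0 := by
        rw [hz'def, dot_sum_right]
        refine Finset.sum_eq_zero fun j _ => ?_
        rw [hx'def]
        simp only []
        rw [hx 0 j.succ, if_neg (Fin.succ_ne_zero j).symm.elim]
        · ring
      obtain ⟨α, β, hu, hq⟩ := seg T (x 0) z' hx00 hc'1 hoz s hs0 (by linarith [hw 0])
      set cf : Fin (m+1) → ℂ := fun i => if h : i = 0 then α else β * c' (i.pred h) with hcf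
      have hzc : ∑ i : Fin (m+1), cf i • x i = α • x 0 + β • z' := by
        rw [Fin.sum_univ_succ]
        have h0 : cf 0 = α := by simp [hcf]
        rw [h0]
        congr 1
        rw [hz'def, Finset.smul_sum]
        refine Finset.sum_congr rfl fun i _ => ?_
        have hsucc : cf i.succ = β * c' i := by
          rw [hcf]
          simp [Fin.succ_ne_zero i]
        have hx'i : x' i = x i.succ := rfl
        rw [hsucc, hx'i, mul_smul]
      refine ⟨cf, ?_, ?_⟩
      · rw [hzc]; exact hu
      · rw [hzc, hq, hc'2, Fin.sum_univ_succ]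
        have h1 : (1 - (s:ℂ)) = (w 0 : ℂ) := by
          have hws : w 0 = 1 - s := by linarith
          rw [hws]; push_cast; ring
        rw [h1]
        congr 1
        rw [Finset.mul_sum]
        refine Finset.sum_congr rfl fun i _ => ?_
        rw [hw'def, hx'def]
        simp only []
        have hcast : ((w i.succ / s : ℝ) : ℂ) = (w i.succ : ℂ) / (s : ℂ) := by push_cast; ring
        rw [hcast]
        have hsC : (s : ℂ) ≠ 0 := by exact_mod_cast hs
        field_simp

variable {n : ℕ}

lemma std_orth : ∀ i j : Fin n,
    star (fun k => if k = i then (1:ℂ) else 0) ⬝ᵥ (fun k => if k = j then (1:ℂ) else 0)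
      = if i = j then 1 else 0 := by
  intro i j
  simp only [dotProduct, Pi.star_apply, apply_ite (star : ℂ → ℂ), star_one, star_zero]
  rw [Finset.sum_eq_single i]
  · by_cases h : i = j <;> simp [h]
  · intro k _ hk; simp [hk]
  · intro h; exact absurd (Finset.mem_univ i) h

lemma zero_vec (hn : 0 < n) (T : Matrix (Fin n) (Fin n) ℂ) (hT : T.trace = 0) :
    ∃ x : Fin n → ℂ, star x ⬝ᵥ x = 1 ∧ star x ⬝ᵥ T *ᵥ x = 0 := by
  set e : Fin n → Fin n → ℂ := fun i => fun k => if k = i then 1 else 0 with he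
  have horth : ∀ i j, star (e i) ⬝ᵥ e j = if i = j then 1 else 0 := std_orth
  have hq : ∀ i, star (e i) ⬝ᵥ T *ᵥ e i = T i i := by
    intro i
    have h1 : T *ᵥ e i = fun k => T k i := by
      funext k
      simp only [mulVec, dotProduct, he]
      rw [Finset.sum_eq_single i]
      · simp
      · intro l _ hl; simp [hl]
      · intro h; exact absurd (Finset.mem_univ i) h
    rw [h1]
    simp only [dotProduct, Pi.star_apply, he, apply_ite (star : ℂ → ℂ), star_one, star_zero]
    rw [Finset.sum_eq_single i]
    · simp
    · intro l _ hl; simp [hl]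
    · intro h; exact absurd (Finset.mem_univ i) h
  have hnR : (0:ℝ) < n := by exact_mod_cast hn
  obtain ⟨c, hc1, hc2⟩ := hull T n e horth (fun _ => 1 / n) (fun _ => by positivity)
    (by
      rw [Finset.sum_const, Finset.card_univ, Fintype.card_fin, nsmul_eq_mul]
      field_simp)
  refine ⟨∑ i, c i • e i, hc1, ?_⟩
  rw [hc2]
  have : ∑ i, ((1 / n : ℝ) : ℂ) * (star (e i) ⬝ᵥ T *ᵥ e i) = ((1/n : ℝ) : ℂ) * T.trace := by
    rw [Matrix.trace, Finset.mul_sum]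
    refine Finset.sum_congr rfl fun i _ => ?_
    rw [hq i]
    rfl
  rw [this, hT, mul_zero]

lemma extend_basis (x : Fin (n+1) → ℂ) (hx : star x ⬝ᵥ x = 1) :
    ∃ b : Fin (n+1) → Fin (n+1) → ℂ, b 0 = x ∧
      ∀ i j, star (b i) ⬝ᵥ b j = if i = j then 1 else 0 := by
  have key : ∀ u v : EuclideanSpace ℂ (Fin (n+1)),
      (inner ℂ u v : ℂ) = star (u : Fin (n+1) → ℂ) ⬝ᵥ (v : Fin (n+1) → ℂ) := by
    intro u v
    simp only [PiLp.inner_apply, RCLike.inner_apply, dotProduct, Pi.star_apply,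
      RCLike.star_def]
    exact Finset.sum_congr rfl fun _ _ => mul_comm _ _
  set y : EuclideanSpace ℂ (Fin (n+1)) := WithLp.toLp 2 x with hy
  have hyy : (inner ℂ y y : ℂ) = 1 := by rw [key]; exact hx
  have hnorm : ‖y‖ = 1 := by
    have h3 : ‖y‖ ^ 2 = 1 := by
      have h := inner_self_eq_norm_sq (𝕜 := ℂ) y
      rw [hyy] at h
      simpa using h.symm
    nlinarith [norm_nonneg y]
  have horth : Orthonormal ℂ (({0} : Set (Fin (n+1))).restrict (fun _ : Fin (n+1) => y)) := by
    constructor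
    · intro i; exact hnorm
    · intro i j hij
      exact absurd (Subtype.ext (by
        have hi := i.2; have hj := j.2
        simp only [Set.mem_singleton_iff] at hi hj
        rw [hi, hj])) hij
  obtain ⟨b, hb⟩ := horth.exists_orthonormalBasis_extension_of_card_eq
    (by simp [finrank_euclideanSpace])
  refine ⟨fun i => (b i : Fin (n+1) → ℂ), ?_, ?_⟩
  · exact congrArg WithLp.ofLp (hb 0 rfl)
  · intro i j
    have := orthonormal_iff_ite.mp b.orthonormal i j
    rw [← key]
    exact this

variable {n : ℕ}

-- conjugation diag formula
lemma conj_diag {N : ℕ} (M : Matrix (Fin N) (Fin N) ℂ) (V : Matrix (Fin N) (Fin N) ℂ)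
    (v : Fin N → Fin N → ℂ) (hV : ∀ k i, V k i = v i k) (i j : Fin N) :
    (Vᴴ * M * V) i j = star (v i) ⬝ᵥ M *ᵥ v j := by
  simp only [Matrix.mul_apply, Matrix.conjTranspose_apply, dotProduct, Matrix.mulVec,
    Pi.star_apply, Finset.sum_mul, Finset.mul_sum, hV]
  rw [Finset.sum_comm]
  refine Finset.sum_congr rfl fun l _ => Finset.sum_congr rfl fun k _ => ?_
  ring

lemma main' : ∀ (n : ℕ) (T : Matrix (Fin n) (Fin n) ℂ), T.trace = 0 →
    ∃ v : Fin n → Fin n → ℂ,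
      (∀ i j, star (v i) ⬝ᵥ v j = if i = j then 1 else 0) ∧
      (∀ i, star (v i) ⬝ᵥ T *ᵥ v i = 0) := by
  intro n
  induction n with
  | zero =>
    intro T _
    exact ⟨fun i => i.elim0, fun i => i.elim0, fun i => i.elim0⟩
  | succ n ih =>
    intro T hT
    obtain ⟨x, hx1, hx2⟩ := zero_vec (Nat.succ_pos n) T hT
    obtain ⟨b, hb0, hbo⟩ := extend_basis x hx1
    -- the unitary with columns b
    set U : Matrix (Fin (n+1)) (Fin (n+1)) ℂ := Matrix.of (fun k i => b i k) with hU
    have hUv : ∀ k i, U k i = b i k := fun k i => rfl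
    have hUU : Uᴴ * U = 1 := by
      ext i j
      rw [Matrix.mul_apply, Matrix.one_apply, ← hbo i j]
      simp only [Matrix.conjTranspose_apply, hUv, dotProduct, Pi.star_apply]
    have hUU2 : U * Uᴴ = 1 := mul_eq_one_comm.mp hUU
    have hconj : ∀ i j, (Uᴴ * T * U) i j = star (b i) ⬝ᵥ T *ᵥ b j :=
      conj_diag T U b hUv
    have htrc : (Uᴴ * T * U).trace = T.trace := by
      rw [Matrix.trace_mul_comm, ← Matrix.mul_assoc, hUU2, Matrix.one_mul]
    set T' : Matrix (Fin n) (Fin n) ℂ :=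
      Matrix.of (fun i j => star (b i.succ) ⬝ᵥ T *ᵥ b j.succ) with hT'
    have hT'v : ∀ i j, T' i j = star (b i.succ) ⬝ᵥ T *ᵥ b j.succ := fun i j => rfl
    have htr' : T'.trace = 0 := by
      have h1 : (Uᴴ * T * U).trace = (Uᴴ * T * U) 0 0 + ∑ i : Fin n, T' i i := by
        rw [Matrix.trace]
        rw [Fin.sum_univ_succ]
        congr 1
        refine Finset.sum_congr rfl fun i _ => ?_
        rw [Matrix.diag_apply, hconj, hT'v]
      have h00 : (Uᴴ * T * U) 0 0 = 0 := by rw [hconj, hb0]; exact hx2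
      rw [htrc, hT, h00, zero_add] at h1
      rw [Matrix.trace]
      exact h1.symm
    obtain ⟨w, hwo, hwz⟩ := ih T' htr'
    set v : Fin (n+1) → Fin (n+1) → ℂ :=
      fun i => Fin.cases x (fun i' => ∑ k, w i' k • b k.succ) i with hv
    have hv0 : v 0 = x := rfl
    have hvs : ∀ i : Fin n, v i.succ = ∑ k, w i k • b k.succ := fun i => rfl
    have hsuccdot : ∀ k l : Fin n, star (b k.succ) ⬝ᵥ b l.succ = if k = l then 1 else 0 := by
      intro k l
      rw [hbo]
      simp [Fin.succ_inj]
    refine ⟨v, ?_, ?_⟩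
    · intro i j
      induction i using Fin.cases with
      | zero =>
        induction j using Fin.cases with
        | zero => rw [hv0, ← hb0, hbo]
        | succ j =>
          rw [hv0, ← hb0, hvs, dot_sum_right, if_neg (Fin.succ_ne_zero j).symm.elim]
          refine Finset.sum_eq_zero fun k _ => ?_
          rw [hbo, if_neg (Fin.succ_ne_zero k).symm.elim]
          ring
      | succ i =>
        induction j using Fin.cases with
        | zero =>
          rw [hv0, ← hb0, hvs, dot_sum_left, if_neg (Fin.succ_ne_zero i).elim]
          refine Finset.sum_eq_zero fun k _ => ?_
          rw [hbo, if_neg (Fin.succ_ne_zero k).elim]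
          ring
        | succ j =>
          rw [hvs, hvs, dot_sum_sum']
          have : ∀ k : Fin n, ∑ l : Fin n,
              star (w i k) * (w j l * (star (b k.succ) ⬝ᵥ b l.succ))
                = star (w i k) * w j k := by
            intro k
            rw [Finset.sum_eq_single k]
            · rw [hsuccdot, if_pos rfl]; ring
            · intro l _ hl
              rw [hsuccdot, if_neg (Ne.symm hl)]; ring
            · intro h; exact absurd (Finset.mem_univ k) h
          rw [Finset.sum_congr rfl fun k _ => this k]
          have hgoal : (if i.succ = j.succ then (1:ℂ) else 0) = if i = j then 1 else 0 := by
            simp [Fin.succ_inj]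
          rw [hgoal, ← hwo i j]
          simp only [dotProduct, Pi.star_apply]
    · intro i
      induction i using Fin.cases with
      | zero => rw [hv0]; exact hx2
      | succ i =>
        rw [hvs, dot_sum_sum]
        have h2 : ∀ k l : Fin n, star (w i k) * (w i l * (star (b k.succ) ⬝ᵥ T *ᵥ b l.succ))
            = star (w i k) * (T' k l * w i l) := by
          intro k l
          rw [hT'v]
          ring
        rw [Finset.sum_congr rfl fun k _ =>
          Finset.sum_congr rfl fun l _ => h2 k l]
        rw [← hwz i]
        simp only [dotProduct, Matrix.mulVec, Pi.star_apply, Finset.mul_sum]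

theorem stmt_13 (n : ℕ) (A B : Matrix (Fin n) (Fin n) ℂ)
    (hA : A.IsHermitian) (hB : B.IsHermitian)
    (htrA : A.trace = 0) (htrB : B.trace = 0) :
    ∃ V : Matrix (Fin n) (Fin n) ℂ, Vᴴ * V = 1 ∧
      (∀ i, (Vᴴ * A * V) i i = 0) ∧ (∀ i, (Vᴴ * B * V) i i = 0) := by
  set T : Matrix (Fin n) (Fin n) ℂ := A + Complex.I • B with hTdef
  have hT : T.trace = 0 := by
    rw [hTdef, Matrix.trace_add, Matrix.trace_smul, htrA, htrB]
    simp
  obtain ⟨v, hvo, hvz⟩ := main' n T hT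
  set V : Matrix (Fin n) (Fin n) ℂ := Matrix.of (fun k i => v i k) with hVdef
  have hVv : ∀ k i, V k i = v i k := fun k i => rfl
  have hVV : Vᴴ * V = 1 := by
    ext i j
    rw [Matrix.mul_apply, Matrix.one_apply, ← hvo i j]
    simp only [Matrix.conjTranspose_apply, hVv, dotProduct, Pi.star_apply]
  -- Hermitian conjugations
  have hAH : (Vᴴ * A * V)ᴴ = Vᴴ * A * V := by
    rw [Matrix.conjTranspose_mul, Matrix.conjTranspose_mul, Matrix.conjTranspose_conjTranspose,
      hA.eq, Matrix.mul_assoc]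
  have hBH : (Vᴴ * B * V)ᴴ = Vᴴ * B * V := by
    rw [Matrix.conjTranspose_mul, Matrix.conjTranspose_mul, Matrix.conjTranspose_conjTranspose,
      hB.eq, Matrix.mul_assoc]
  have hreA : ∀ i, star ((Vᴴ * A * V) i i) = (Vᴴ * A * V) i i := by
    intro i
    conv_rhs => rw [← hAH]
    rw [Matrix.conjTranspose_apply]
  have hreB : ∀ i, star ((Vᴴ * B * V) i i) = (Vᴴ * B * V) i i := by
    intro i
    conv_rhs => rw [← hBH]
    rw [Matrix.conjTranspose_apply]
  have hsplit : Vᴴ * T * V = Vᴴ * A * V + Complex.I • (Vᴴ * B * V) := by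
    rw [hTdef, Matrix.mul_add, Matrix.add_mul, Matrix.mul_smul, Matrix.smul_mul]
  have hdiagT : ∀ i, (Vᴴ * T * V) i i = 0 := by
    intro i
    rw [conj_diag T V v hVv]
    exact hvz i
  have key : ∀ i, (Vᴴ * A * V) i i + Complex.I * (Vᴴ * B * V) i i = 0 := by
    intro i
    have := hdiagT i
    rw [hsplit] at this
    simpa [Matrix.add_apply, Matrix.smul_apply, smul_eq_mul] using this
  refine ⟨V, hVV, ?_, ?_⟩
  · intro i
    have h1 := key i
    have h2 := congrArg star h1
    rw [star_add, star_mul', hreA i, hreB i, star_zero, Complex.star_def, Complex.conj_I] at h2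
    -- h2 : (VᴴAV) i i + (-I) * (VᴴBV) i i = 0
    have := add_eq_zero_iff_eq_neg.mp h1
    linear_combination (h1 + h2) / 2
  · intro i
    have h1 := key i
    have h2 := congrArg star h1
    rw [star_add, star_mul', hreA i, hreB i, star_zero, Complex.star_def, Complex.conj_I] at h2
    have hI : Complex.I * (Vᴴ * B * V) i i = 0 := by linear_combination (h1 - h2) / 2
    have := mul_eq_zero.mp hI
    rcases this with h | h
    · exact absurd h Complex.I_ne_zero
    · exact h
end

section
/- Let A ∈ ℂ^{n×n} with tr A = 0 (not necessarily Hermitian). Then there exists a unitary matrix V ∈ ℂ^{n×n} such that V*AV is hollow. -/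
open Matrix

namespace Stmt14
noncomputable section
open Complex Finset
variable {n : ℕ}

def q (A : Matrix (Fin n) (Fin n) ℂ) (v : Fin n → ℂ) : ℂ := star v ⬝ᵥ (A *ᵥ v)
def sq (A : Matrix (Fin n) (Fin n) ℂ) (v w : Fin n → ℂ) : ℂ := star v ⬝ᵥ (A *ᵥ w)

lemma sq_add_left (A : Matrix (Fin n) (Fin n) ℂ) (v v' w : Fin n → ℂ) :
    sq A (v + v') w = sq A v w + sq A v' w := by
  simp [sq, star_add, add_dotProduct]

lemma sq_add_right (A : Matrix (Fin n) (Fin n) ℂ) (v w w' : Fin n → ℂ) :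
    sq A v (w + w') = sq A v w + sq A v w' := by
  simp [sq, mulVec_add, dotProduct_add]

lemma sq_smul_left (A : Matrix (Fin n) (Fin n) ℂ) (c : ℂ) (v w : Fin n → ℂ) :
    sq A (c • v) w = (starRingEnd ℂ) c * sq A v w := by
  simp [sq, star_smul, smul_dotProduct]

lemma sq_smul_right (A : Matrix (Fin n) (Fin n) ℂ) (c : ℂ) (v w : Fin n → ℂ) :
    sq A v (c • w) = c * sq A v w := by
  simp [sq, mulVec_smul, dotProduct_smul]

lemma q_eq_sq (A : Matrix (Fin n) (Fin n) ℂ) (v : Fin n → ℂ) : q A v = sq A v v := rfl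

lemma q_smul (A : Matrix (Fin n) (Fin n) ℂ) (c : ℂ) (v : Fin n → ℂ) :
    q A (c • v) = (starRingEnd ℂ) c * c * q A v := by
  rw [q_eq_sq, sq_smul_left, sq_smul_right, ← q_eq_sq]; ring

lemma q_add (A : Matrix (Fin n) (Fin n) ℂ) (v w : Fin n → ℂ) :
    q A (v + w) = q A v + q A w + sq A v w + sq A w v := by
  rw [q_eq_sq, sq_add_left, sq_add_right, sq_add_right, ← q_eq_sq, ← q_eq_sq]; ring

def Nr (v : Fin n → ℂ) : ℝ := ∑ i, Complex.normSq (v i)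

lemma star_dot_self (v : Fin n → ℂ) : star v ⬝ᵥ v = (Nr v : ℂ) := by
  simp only [dotProduct, Nr, Pi.star_apply, RCLike.star_def]
  push_cast
  exact Finset.sum_congr rfl fun i _ => (Complex.normSq_eq_conj_mul_self).symm ▸ rfl

lemma Nr_nonneg (v : Fin n → ℂ) : 0 ≤ Nr v :=
  Finset.sum_nonneg fun i _ => Complex.normSq_nonneg _

lemma Nr_eq_zero {v : Fin n → ℂ} (h : Nr v = 0) : v = 0 := by
  funext i
  have := (Finset.sum_eq_zero_iff_of_nonneg (fun i _ => Complex.normSq_nonneg (v i))).mp h i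
    (Finset.mem_univ i)
  simpa using Complex.normSq_eq_zero.mp this

def NR (A : Matrix (Fin n) (Fin n) ℂ) : Set ℂ :=
  {z | ∃ v, star v ⬝ᵥ v = (1 : ℂ) ∧ q A v = z}

/-- star of a unit dot with itself is nonzero vector -/
lemma unit_ne_zero {v : Fin n → ℂ} (hv : star v ⬝ᵥ v = 1) : v ≠ 0 := by
  intro h; rw [h] at hv; simp at hv

/-- Key segment lemma -/
lemma key (A : Matrix (Fin n) (Fin n) ℂ) {x y : Fin n → ℂ}
    (hx : star x ⬝ᵥ x = 1) (hy : star y ⬝ᵥ y = 1)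
    (hqx : q A x = 0) (hqy : q A y = 1) {t : ℝ} (ht : t ∈ Set.Icc (0:ℝ) 1) :
    (t : ℂ) ∈ NR A := by
  classical
  set b : ℂ := sq A x y with hb
  set p : ℂ := sq A y x with hp
  -- Step A : find a phase θ making the cross term real
  have hg : ∃ θ : ℝ, (Complex.exp (-(θ:ℂ) * I) * b + Complex.exp ((θ:ℂ) * I) * p).im = 0 := by
    set g : ℝ → ℝ := fun θ => (Complex.exp (-(θ:ℂ) * I) * b + Complex.exp ((θ:ℂ) * I) * p).im
      with hgdef
    have hcont : Continuous g := by
      apply Complex.continuous_im.comp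
      fun_prop
    have hgpi : g Real.pi = -(g 0) := by
      have h1 : Complex.exp (-((Real.pi:ℂ) * I)) = -1 := by
        rw [Complex.exp_neg, Complex.exp_pi_mul_I]; norm_num
      have h2 : Complex.exp ((Real.pi:ℂ) * I) = -1 := Complex.exp_pi_mul_I
      simp [hgdef, neg_mul, h1, h2]
      ring
    rcases le_total (g 0) 0 with h0 | h0
    · have := intermediate_value_Icc (le_of_lt Real.pi_pos) hcont.continuousOn
        (a := 0) (b := Real.pi)
      have hmem : (0:ℝ) ∈ Set.Icc (g 0) (g Real.pi) := ⟨h0, by rw [hgpi]; linarith⟩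
      obtain ⟨θ, _, hθ⟩ := this hmem
      exact ⟨θ, hθ⟩
    · have := intermediate_value_Icc' (le_of_lt Real.pi_pos) hcont.continuousOn
        (a := 0) (b := Real.pi)
      have hmem : (0:ℝ) ∈ Set.Icc (g Real.pi) (g 0) := ⟨by rw [hgpi]; linarith, h0⟩
      obtain ⟨θ, _, hθ⟩ := this hmem
      exact ⟨θ, hθ⟩
  obtain ⟨θ, hθ⟩ := hg
  set u : ℂ := Complex.exp ((θ:ℂ) * I) with hu
  have hcu : (starRingEnd ℂ) u = Complex.exp (-(θ:ℂ) * I) := by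
    rw [hu, ← Complex.exp_conj]
    congr 1
    simp [Complex.conj_I, Complex.conj_ofReal]
  have huu : (starRingEnd ℂ) u * u = 1 := by
    rw [hcu, hu, ← Complex.exp_add]; simp
  set x' : Fin n → ℂ := u • x with hx'
  have hx'unit : star x' ⬝ᵥ x' = 1 := by
    rw [hx', star_smul, smul_dotProduct, dotProduct_smul, hx]
    simp [smul_eq_mul, huu]
  have hqx' : q A x' = 0 := by rw [hx', q_smul, hqx]; ring
  set c : ℂ := sq A x' y + sq A y x' with hc
  have hcim : c.im = 0 := by
    have e1 : sq A x' y = (starRingEnd ℂ) u * b := by rw [hx', sq_smul_left, hb]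
    have e2 : sq A y x' = u * p := by rw [hx', sq_smul_right, hp]
    rw [hc, e1, e2, hcu]
    exact hθ
  have hcre : c = (c.re : ℂ) := by
    exact Complex.ext rfl (by simp [hcim])
  -- the path
  set vv : ℝ → (Fin n → ℂ) := fun s => ((1 - s : ℝ) : ℂ) • x' + ((s : ℝ) : ℂ) • y with hvv
  have hqvv : ∀ s : ℝ, q A (vv s) = ((s^2 + (1-s)*s*c.re : ℝ) : ℂ) := by
    intro s
    have h1 : q A (vv s) = (s:ℂ)^2 + ((1-s:ℝ):ℂ) * (s:ℂ) * (sq A x' y + sq A y x') := by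
      rw [hvv]
      simp only [q_add, q_smul, sq_smul_left, sq_smul_right, hqx', hqy, Complex.conj_ofReal]
      push_cast
      ring
    rw [h1, ← hc, hcre]
    simp only [Complex.ofReal_re]
    push_cast
    ring
  -- nonvanishing of the path
  have hNpos : ∀ s ∈ Set.Icc (0:ℝ) 1, 0 < Nr (vv s) := by
    intro s hs
    rcases lt_or_eq_of_le (Nr_nonneg (vv s)) with h | h
    · exact h
    exfalso
    have hzero : vv s = 0 := Nr_eq_zero h.symm
    rw [hvv] at hzero
    by_cases hs1 : s = 1
    · rw [hs1] at hzero
      have : y = 0 := by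
        funext i
        have := congrFun hzero i
        simpa using this
      exact unit_ne_zero hy this
    · have ha : (1 - (s:ℂ)) ≠ 0 := by
        intro h'
        apply hs1
        have := congrArg Complex.re h'
        simp at this
        linarith
      set k : ℂ := -(s:ℂ) / (1 - (s:ℂ)) with hk
      have hx'k : x' = k • y := by
        funext i
        have hthis := congrFun hzero i
        simp only [Pi.add_apply, Pi.smul_apply, smul_eq_mul, Pi.zero_apply] at hthis
        push_cast at hthis
        simp only [Pi.smul_apply, smul_eq_mul, hk]
        field_simp
        linear_combination hthis
      have h0 : q A x' = (starRingEnd ℂ) k * k * q A y := by rw [hx'k, q_smul]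
      rw [hqx', hqy, mul_one] at h0
      have hk0 : k = 0 := by
        rcases mul_eq_zero.mp h0.symm with h' | h'
        · exact (map_eq_zero (starRingEnd ℂ)).mp h'
        · exact h'
      have hx'0 : x' = 0 := by rw [hx'k, hk0, zero_smul]
      exact unit_ne_zero hx'unit hx'0
  -- continuity of the denominator
  have hNcont : Continuous fun s : ℝ => Nr (vv s) := by
    have heq : (fun s : ℝ => Nr (vv s)) = fun s : ℝ =>
        ∑ i, Complex.normSq (((1 - s : ℝ) : ℂ) * x' i + ((s : ℝ) : ℂ) * y i) := by
      funext s; simp [Nr, hvv]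
    rw [heq]
    apply continuous_finset_sum
    intro i _
    apply Complex.continuous_normSq.comp
    fun_prop
  -- the real function along the path
  set f : ℝ → ℝ := fun s => (s^2 + (1-s)*s*c.re) / Nr (vv s) with hf
  have hfcont : ContinuousOn f (Set.Icc 0 1) := by
    apply ContinuousOn.div
    · exact (by fun_prop : Continuous fun s : ℝ => s^2 + (1-s)*s*c.re).continuousOn
    · exact hNcont.continuousOn
    · exact fun s hs => (hNpos s hs).ne'
  have hvv1 : vv 1 = y := by
    funext i; simp [hvv]
  have hNr1 : Nr (vv 1) = 1 := by
    rw [hvv1]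
    have h2 := star_dot_self y
    rw [hy] at h2
    exact_mod_cast h2.symm
  have hf0 : f 0 = 0 := by simp [hf]
  have hf1 : f 1 = 1 := by simp [hf, hNr1]
  have hIVT := intermediate_value_Icc (by norm_num : (0:ℝ) ≤ 1) hfcont
  rw [hf0, hf1] at hIVT
  obtain ⟨s, hs, hfs⟩ := hIVT ht
  -- normalize
  set r : ℝ := Real.sqrt (Nr (vv s)) with hr
  have hNs : 0 < Nr (vv s) := hNpos s hs
  have hrr : r * r = Nr (vv s) := Real.mul_self_sqrt (Nr_nonneg _)
  have hrpos : 0 < r := Real.sqrt_pos.mpr hNs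
  refine ⟨((r⁻¹ : ℝ) : ℂ) • vv s, ?_, ?_⟩
  · rw [star_smul, smul_dotProduct, dotProduct_smul, star_dot_self]
    simp only [smul_eq_mul, RCLike.star_def, Complex.conj_ofReal]
    rw [← Complex.ofReal_mul, ← Complex.ofReal_mul]
    rw [show r⁻¹ * (r⁻¹ * Nr (vv s)) = 1 by rw [← hrr]; field_simp]
    norm_num
  · rw [q_smul, Complex.conj_ofReal, hqvv s, ← Complex.ofReal_mul, ← Complex.ofReal_mul]
    congr 1
    rw [← hfs, hf]
    show r⁻¹ * r⁻¹ * (s ^ 2 + (1 - s) * s * c.re) = (s ^ 2 + (1 - s) * s * c.re) / Nr (vv s)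
    rw [← hrr]
    field_simp


lemma q_smul_matrix (c : ℂ) (A : Matrix (Fin n) (Fin n) ℂ) (v : Fin n → ℂ) :
    q (c • A) v = c * q A v := by
  simp [q, smul_mulVec, dotProduct_smul]

lemma q_add_matrix (A B : Matrix (Fin n) (Fin n) ℂ) (v : Fin n → ℂ) :
    q (A + B) v = q A v + q B v := by
  simp [q, add_mulVec, dotProduct_add]

lemma q_one {v : Fin n → ℂ} (hv : star v ⬝ᵥ v = 1) : q (1 : Matrix (Fin n) (Fin n) ℂ) v = 1 := by
  simp [q, one_mulVec, hv]

lemma mem_NR_affine {A : Matrix (Fin n) (Fin n) ℂ} {z : ℂ} (c w : ℂ) (hz : z ∈ NR A) :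
    c * z + w ∈ NR (c • A + w • (1 : Matrix (Fin n) (Fin n) ℂ)) := by
  obtain ⟨v, hv, hq⟩ := hz
  exact ⟨v, hv, by rw [q_add_matrix, q_smul_matrix, q_smul_matrix, q_one hv, hq]; ring⟩

lemma diag_mem_NR (A : Matrix (Fin n) (Fin n) ℂ) (i : Fin n) : A i i ∈ NR A := by
  refine ⟨Pi.single i 1, ?_, ?_⟩
  · simp [dotProduct, Pi.single_apply, apply_ite]
  · simp [q, dotProduct, Pi.single_apply, apply_ite, mulVec, Finset.sum_ite_eq',
      Finset.sum_ite_eq]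

lemma NR_convex (A : Matrix (Fin n) (Fin n) ℂ) : Convex ℝ (NR A) := by
  intro α hα β hβ a bb ha hbb hab
  by_cases hαβ : α = β
  · subst hαβ
    have : a • α + bb • α = α := by rw [← add_smul, hab, one_smul]
    rw [this]; exact hα
  · have hβα : β - α ≠ 0 := sub_ne_zero.mpr (Ne.symm hαβ)
    set A' : Matrix (Fin n) (Fin n) ℂ :=
      (β - α)⁻¹ • A + (-α * (β - α)⁻¹) • (1 : Matrix (Fin n) (Fin n) ℂ) with hA'
    obtain ⟨x, hxu, hxq⟩ := hα
    obtain ⟨y, hyu, hyq⟩ := hβ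
    have hq'x : q A' x = 0 := by
      rw [hA', q_add_matrix, q_smul_matrix, q_smul_matrix, q_one hxu, hxq]
      field_simp
      ring
    have hq'y : q A' y = 1 := by
      rw [hA', q_add_matrix, q_smul_matrix, q_smul_matrix, q_one hyu, hyq]
      field_simp
      ring
    have hbb1 : bb ∈ Set.Icc (0:ℝ) 1 := ⟨hbb, by linarith⟩
    have hkey : ((bb : ℝ) : ℂ) ∈ NR A' := key A' hxu hyu hq'x hq'y hbb1
    have haff := mem_NR_affine (A := A') (β - α) α hkey
    have hAA : (β - α) • A' + α • (1 : Matrix (Fin n) (Fin n) ℂ) = A := by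
      rw [hA', smul_add, smul_smul, smul_smul, mul_inv_cancel₀ hβα, one_smul]
      have h1 : (β - α) * (-α * (β - α)⁻¹) = -α := by field_simp
      rw [h1, add_assoc, ← add_smul]
      simp
    rw [hAA] at haff
    have hval : a • α + bb • β = (β - α) * ((bb : ℝ) : ℂ) + α := by
      have haa : a = 1 - bb := by linarith
      rw [haa]
      simp only [Complex.real_smul]
      push_cast
      ring
    rw [hval]
    exact haff

lemma zero_mem_NR (hn : n ≠ 0) (A : Matrix (Fin n) (Fin n) ℂ) (htr : A.trace = 0) :
    (0 : ℂ) ∈ NR A := by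
  have hconv := NR_convex A
  have hmem := hconv.sum_mem (t := Finset.univ) (w := fun _ : Fin n => (n : ℝ)⁻¹)
    (z := fun i => A i i)
    (fun i _ => by positivity)
    (by
      rw [Finset.sum_const, Finset.card_univ, Fintype.card_fin, nsmul_eq_mul]
      field_simp)
    (fun i _ => diag_mem_NR A i)
  have hsum : ∑ i : Fin n, (n : ℝ)⁻¹ • A i i = 0 := by
    rw [← Finset.smul_sum]
    have : ∑ i : Fin n, A i i = 0 := htr
    rw [this, smul_zero]
  rwa [hsum] at hmem

lemma exists_unit_q_zero (hn : n ≠ 0) (A : Matrix (Fin n) (Fin n) ℂ) (htr : A.trace = 0) :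
    ∃ v : Fin n → ℂ, star v ⬝ᵥ v = 1 ∧ q A v = 0 :=
  zero_mem_NR hn A htr

lemma conj_entry (V B : Matrix (Fin n) (Fin n) ℂ) (i j : Fin n) :
    (Vᴴ * B * V) i j = sq B (fun k => V k i) (fun k => V k j) := by
  simp only [sq, Matrix.mul_apply, Matrix.conjTranspose_apply, dotProduct, mulVec,
    Pi.star_apply, Finset.sum_mul, Finset.mul_sum]
  rw [Finset.sum_comm]
  refine Finset.sum_congr rfl fun l _ => Finset.sum_congr rfl fun k _ => by ring

lemma exists_unitary_first_col {m : ℕ} {v : Fin (m+1) → ℂ} (hv : star v ⬝ᵥ v = 1) :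
    ∃ V : Matrix (Fin (m+1)) (Fin (m+1)) ℂ, Vᴴ * V = 1 ∧ (fun k => V k 0) = v := by
  set v' : EuclideanSpace ℂ (Fin (m+1)) := WithLp.toLp 2 (fun i => v i) with hv'
  have hcard : Module.finrank ℂ (EuclideanSpace ℂ (Fin (m+1))) = Fintype.card (Fin (m+1)) := by
    simp
  have hinner : (@inner ℂ _ _ v' v') = star v ⬝ᵥ v := by
    rw [PiLp.inner_apply]
    simp only [hv', dotProduct, RCLike.inner_apply, Pi.star_apply, RCLike.star_def]
    exact Finset.sum_congr rfl fun _ _ => mul_comm _ _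
  have horth : Orthonormal ℂ
      (({0} : Set (Fin (m+1))).restrict (fun _ : Fin (m+1) => v')) := by
    rw [orthonormal_iff_ite]
    intro i j
    rw [Subsingleton.elim i j, if_pos rfl]
    exact hinner.trans hv
  obtain ⟨b, hb⟩ := Orthonormal.exists_orthonormalBasis_extension_of_card_eq hcard horth
  have hb0 : b 0 = v' := hb 0 rfl
  refine ⟨Matrix.of (fun k i => b i k), ?_, ?_⟩
  · ext i j
    have hbij := (orthonormal_iff_ite.mp b.orthonormal) i j
    rw [PiLp.inner_apply] at hbij
    simp only [RCLike.inner_apply] at hbij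
    rw [Matrix.mul_apply]
    simp only [Matrix.conjTranspose_apply, Matrix.of_apply, Matrix.one_apply, Pi.star_apply,
      RCLike.star_def]
    exact (Finset.sum_congr rfl fun _ _ => mul_comm _ _).trans hbij
  · funext k
    simp only [Matrix.of_apply]
    exact congrArg (fun w => w k) hb0

lemma extend_unitary {m : ℕ} (W' : Matrix (Fin m) (Fin m) ℂ) (hW'u : W'ᴴ * W' = 1)
    (B : Matrix (Fin (m+1)) (Fin (m+1)) ℂ) :
    ∃ W : Matrix (Fin (m+1)) (Fin (m+1)) ℂ, Wᴴ * W = 1 ∧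
      (Wᴴ * B * W) 0 0 = B 0 0 ∧
      ∀ i : Fin m, (Wᴴ * B * W) i.succ i.succ =
        (W'ᴴ * (B.submatrix Fin.succ Fin.succ) * W') i i := by
  set W : Matrix (Fin (m+1)) (Fin (m+1)) ℂ :=
    Matrix.of (Fin.cons (Fin.cons 1 0) (fun i' => Fin.cons 0 (W' i'))) with hWdef
  have e00 : W 0 0 = 1 := rfl
  have e0s : ∀ j : Fin m, W 0 j.succ = 0 := fun j => by simp [hWdef]
  have es0 : ∀ i : Fin m, W i.succ 0 = 0 := fun i => by simp [hWdef]
  have ess : ∀ i j : Fin m, W i.succ j.succ = W' i j := fun i j => by simp [hWdef]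
  have hW'entry : ∀ a b : Fin m, (∑ k, star (W' k a) * W' k b) = if a = b then 1 else 0 := by
    intro a b
    have h := congrFun (congrFun hW'u a) b
    simpa [Matrix.mul_apply, Matrix.conjTranspose_apply, Matrix.one_apply] using h
  have hWu : Wᴴ * W = 1 := by
    ext i j
    rw [Matrix.mul_apply]
    simp only [Matrix.conjTranspose_apply, Pi.star_apply]
    rw [Fin.sum_univ_succ]
    induction i using Fin.cases with
    | zero =>
      induction j using Fin.cases with
      | zero => simp [e00, es0, Matrix.one_apply]
      | succ j => simp [e00, e0s, es0, Matrix.one_apply, (Fin.succ_ne_zero j).symm]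
    | succ i =>
      induction j using Fin.cases with
      | zero => simp [e00, e0s, es0, Matrix.one_apply, Fin.succ_ne_zero i]
      | succ j =>
        simp only [e0s, es0, ess, star_zero, zero_mul, mul_zero, zero_add]
        rw [hW'entry i j]
        simp [Matrix.one_apply, Fin.succ_inj]
  refine ⟨W, hWu, ?_, ?_⟩
  · rw [conj_entry]
    simp only [sq, dotProduct, mulVec, Pi.star_apply]
    rw [Fin.sum_univ_succ]
    simp [Fin.sum_univ_succ, e00, es0, e0s]
  · intro i
    rw [conj_entry, conj_entry]
    simp only [sq, dotProduct, mulVec, Pi.star_apply, Matrix.submatrix_apply]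
    rw [Fin.sum_univ_succ]
    simp only [e0s, es0, ess, star_zero, zero_mul, zero_add]
    apply Finset.sum_congr rfl
    intro l _
    congr 1
    rw [Fin.sum_univ_succ]
    simp [e0s, es0, ess]

theorem main : ∀ (m : ℕ) (A : Matrix (Fin m) (Fin m) ℂ), A.trace = 0 →
    ∃ V : Matrix (Fin m) (Fin m) ℂ, Vᴴ * V = 1 ∧ ∀ i, (Vᴴ * A * V) i i = 0 := by
  intro m
  induction m with
  | zero => exact fun A _ => ⟨1, by simp, fun i => i.elim0⟩
  | succ m ih =>
    intro A htr
    obtain ⟨v, hv, hqv⟩ := exists_unit_q_zero (Nat.succ_ne_zero m) A htr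
    obtain ⟨V₁, hV₁u, hV₁col⟩ := exists_unitary_first_col hv
    set B := V₁ᴴ * A * V₁ with hB
    have hB00 : B 0 0 = 0 := by
      rw [hB, conj_entry, hV₁col]
      exact hqv
    have htrB : B.trace = 0 := by
      have hVV1 : V₁ * V₁ᴴ = 1 := mul_eq_one_comm.mp hV₁u
      rw [hB, Matrix.trace_mul_cycle, hVV1, Matrix.one_mul, htr]
    have htrB' : (B.submatrix Fin.succ Fin.succ).trace = 0 := by
      have h1 : B.trace = B 0 0 + ∑ i : Fin m, B i.succ i.succ := by
        rw [Matrix.trace]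
        exact Fin.sum_univ_succ _
      rw [Matrix.trace]
      have : ∑ i : Fin m, B i.succ i.succ = 0 := by
        rw [htrB, hB00] at h1
        linear_combination -h1
      simpa [Matrix.diag, Matrix.submatrix_apply] using this
    obtain ⟨W', hW'u, hW'diag⟩ := ih (B.submatrix Fin.succ Fin.succ) htrB'
    obtain ⟨W, hWu, hW00, hWsucc⟩ := extend_unitary W' hW'u B
    refine ⟨V₁ * W, ?_, ?_⟩
    · rw [Matrix.conjTranspose_mul, Matrix.mul_assoc, ← Matrix.mul_assoc V₁ᴴ V₁ W, hV₁u,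
        Matrix.one_mul, hWu]
    · intro i
      have hconj : (V₁ * W)ᴴ * A * (V₁ * W) = Wᴴ * B * W := by
        rw [hB]
        simp only [Matrix.conjTranspose_mul, Matrix.mul_assoc]
      rw [hconj]
      induction i using Fin.cases with
      | zero => rw [hW00, hB00]
      | succ i => rw [hWsucc i, hW'diag i]

end
end Stmt14

theorem stmt_14 (n : ℕ) (A : Matrix (Fin n) (Fin n) ℂ) (htr : A.trace = 0) :
    ∃ V : Matrix (Fin n) (Fin n) ℂ, Vᴴ * V = 1 ∧ ∀ i, (Vᴴ * A * V) i i = 0 :=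
  Stmt14.main n A htr
end

section
/- For n ≥ 2, let A = diag(1, −1−(n−2)i, i, …, i) ∈ ℂ^{n×n} (with n−2 entries equal to i) and let B be the matrix with B_{2,1} = 1 and all other entries zero. Then tr A = tr B = 0, but there is no nonzero v ∈ ℂ^n with v*Av = 0 and v*Bv = 0. -/
open Matrix

lemma sum_split_aux {M : Type*} [AddCommMonoid M] {n : ℕ} (i0 i1 : Fin n) (h : i0 ≠ i1)
    (f : Fin n → M) :
    ∑ k, f k = f i0 + f i1 + ∑ k ∈ ({i0, i1} : Finset (Fin n))ᶜ, f k := by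
  rw [← Finset.sum_add_sum_compl ({i0, i1} : Finset (Fin n)) f, Finset.sum_pair h]

theorem stmt_16 (n : ℕ) (hn : 2 ≤ n)
    (A B : Matrix (Fin n) (Fin n) ℂ)
    (hA : A = Matrix.diagonal (fun k : Fin n =>
      if (k : ℕ) = 0 then 1
      else if (k : ℕ) = 1 then -1 - (n - 2 : ℕ) * Complex.I
      else Complex.I))
    (hB : B = fun i j : Fin n => if (i : ℕ) = 1 ∧ (j : ℕ) = 0 then 1 else 0) :
    A.trace = 0 ∧ B.trace = 0 ∧
      ∀ v : Fin n → ℂ,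
        star v ⬝ᵥ A.mulVec v = 0 → star v ⬝ᵥ B.mulVec v = 0 → v = 0 := by
  subst hA hB
  set i0 : Fin n := ⟨0, by omega⟩ with hi0
  set i1 : Fin n := ⟨1, by omega⟩ with hi1
  have hne : i0 ≠ i1 := by simp [hi0, hi1, Fin.ext_iff]
  set d : Fin n → ℂ := fun k =>
      if (k : ℕ) = 0 then 1
      else if (k : ℕ) = 1 then -1 - (n - 2 : ℕ) * Complex.I
      else Complex.I with hd
  have hd0 : d i0 = 1 := by simp [hd, hi0]
  have hd1 : d i1 = -1 - (n - 2 : ℕ) * Complex.I := by simp [hd, hi1]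
  have hcompl : ∀ k : Fin n, k ∈ ({i0, i1} : Finset (Fin n))ᶜ → d k = Complex.I := by
    intro k hk
    simp only [Finset.mem_compl, Finset.mem_insert, Finset.mem_singleton, not_or] at hk
    have h1 : (k : ℕ) ≠ 0 := fun h => hk.1 (Fin.ext (by simp [hi0, h]))
    have h2 : (k : ℕ) ≠ 1 := fun h => hk.2 (Fin.ext (by simp [hi1, h]))
    simp [hd, h1, h2]
  have hcard : (({i0, i1} : Finset (Fin n))ᶜ).card = n - 2 := by
    rw [Finset.card_compl, Finset.card_pair hne]
    simp
  refine ⟨?_, ?_, ?_⟩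
  · rw [Matrix.trace_diagonal, sum_split_aux i0 i1 hne d, hd0, hd1,
      Finset.sum_congr rfl hcompl, Finset.sum_const, hcard, nsmul_eq_mul]
    ring
  · unfold Matrix.trace
    apply Finset.sum_eq_zero
    intro k _
    simp only [Matrix.diag]
    split_ifs with h
    · omega
    · rfl
  · intro v h1 h2
    -- simplify h2
    have hBmv : ∀ i : Fin n,
        ((fun i j : Fin n => if (i : ℕ) = 1 ∧ (j : ℕ) = 0 then (1 : ℂ) else 0) *ᵥ v) i
          = if (i : ℕ) = 1 then v i0 else 0 := by
      intro i
      simp only [mulVec, dotProduct]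
      by_cases hi : (i : ℕ) = 1
      · rw [Finset.sum_eq_single i0]
        · simp [hi, hi0]
        · intro b _ hb
          have : (b : ℕ) ≠ 0 := fun h => hb (Fin.ext (by simp [hi0, h]))
          simp [this]
        · simp
      · rw [if_neg hi]
        apply Finset.sum_eq_zero
        intro j _
        simp [hi]
    simp only [dotProduct, hBmv] at h2
    have hb1 : ∀ b ∈ (Finset.univ : Finset (Fin n)), b ≠ i1 →
        star v b * (if (b : ℕ) = 1 then v i0 else 0) = 0 := by
      intro b _ hb
      have : (b : ℕ) ≠ 1 := fun h => hb (Fin.ext (by simp [hi1, h]))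
      simp [this]
    rw [Finset.sum_eq_single i1 hb1 (by simp)] at h2
    rw [if_pos (show ((i1 : Fin n) : ℕ) = 1 by simp [hi1])] at h2
    have h2' : v i1 = 0 ∨ v i0 = 0 := by
      rcases mul_eq_zero.mp h2 with h | h
      · left; exact star_eq_zero.mp (by simpa using h)
      · right; simpa using h
    -- simplify h1
    simp only [dotProduct, mulVec_diagonal, Pi.star_apply, ← hd] at h1
    set rr : Fin n → ℝ := fun k => Complex.normSq (v k) with hrr
    have hterm : ∀ k : Fin n, star (v k) * (d k * v k) = d k * (rr k : ℂ) := by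
      intro k
      rw [show star (v k) * (d k * v k) = d k * (v k * star (v k)) by ring]
      congr 1
      simpa [hrr] using (Complex.mul_conj (v k))
    simp only [hterm] at h1
    have hre := congrArg Complex.re h1
    have him := congrArg Complex.im h1
    rw [Complex.re_sum, sum_split_aux i0 i1 hne] at hre
    rw [Complex.im_sum, sum_split_aux i0 i1 hne] at him
    simp only [Complex.mul_re, Complex.mul_im, Complex.ofReal_re, Complex.ofReal_im,
      mul_zero, sub_zero, zero_add, add_zero, Complex.zero_re, Complex.zero_im] at hre him
    have hre0 : (d i0).re = 1 := by rw [hd0]; simp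
    have hre1 : (d i1).re = -1 := by rw [hd1]; simp
    have him0 : (d i0).im = 0 := by rw [hd0]; simp
    have him1 : (d i1).im = -((n - 2 : ℕ) : ℝ) := by rw [hd1]; simp
    have hcre : ∀ k ∈ ({i0, i1} : Finset (Fin n))ᶜ, (d k).re * rr k = 0 := by
      intro k hk; rw [hcompl k hk]; simp
    have hcim : ∀ k ∈ ({i0, i1} : Finset (Fin n))ᶜ, (d k).im * rr k = rr k := by
      intro k hk; rw [hcompl k hk]; simp
    rw [Finset.sum_congr rfl hcre, Finset.sum_const_zero, hre0, hre1] at hre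
    rw [Finset.sum_congr rfl hcim, him0, him1] at him
    -- from hre : rr i0 = rr i1
    have heq : rr i0 = rr i1 := by linarith
    have h01 : rr i0 = 0 ∧ rr i1 = 0 := by
      rcases h2' with h | h
      · have : rr i1 = 0 := by simp [hrr, h]
        exact ⟨heq.trans this, this⟩
      · have : rr i0 = 0 := by simp [hrr, h]
        exact ⟨this, heq.symm.trans (heq.symm ▸ this)⟩
    have hsum0 : ∑ k ∈ ({i0, i1} : Finset (Fin n))ᶜ, rr k = 0 := by
      rw [h01.1, h01.2] at him
      linarith
    have hall : ∀ k ∈ ({i0, i1} : Finset (Fin n))ᶜ, rr k = 0 :=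
      (Finset.sum_eq_zero_iff_of_nonneg (fun k _ => Complex.normSq_nonneg (v k))).mp hsum0
    funext k
    have hk0 : rr k = 0 := by
      by_cases h : k ∈ ({i0, i1} : Finset (Fin n))ᶜ
      · exact hall k h
      · simp only [Finset.mem_compl, Finset.mem_insert, Finset.mem_singleton, not_or,
          not_and_or, not_not] at h
        rcases h with h | h
        · rw [h]; exact h01.1
        · rw [h]; exact h01.2
    exact Complex.normSq_eq_zero.mp hk0
end
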